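/- If a differential bundle 𝗊 has a connection (K, H), then the cone consisting of K : T(E) → E, T(q) : T(E) → T(M) and p : T(E) → E exhibits T(E) as the limit (fibred product over M) of the diagram q : E → M, p : T(M) → M, q : E → M; that is, for any maps f₀ : X → E, f₁ : X → T(M), f₂ : X → E with f₀q = f₁p = f₂q there exists a unique map h : X → T(E) with hK = f₀, hT(q) = f₁ and hp = f₂. -/
import Mathlib


open CategoryTheory CategoryTheory.Limits

open scoped Classical

universe v u

variable {C : Type u} [Category.{v} C]

/-- Chosen pullback: explicit pullback data for a cospan `f : A ⟶ Z ⟵ B : g`. -/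
structure ChosenPB {A B Z : C} (f : A ⟶ Z) (g : B ⟶ Z) where
  P : C
  pr0 : P ⟶ A
  pr1 : P ⟶ B
  comm : pr0 ≫ f = pr1 ≫ g
  pair : ∀ {X : C} (u : X ⟶ A) (v : X ⟶ B), u ≫ f = v ≫ g → (X ⟶ P)
  pair_pr0 : ∀ {X : C} (u : X ⟶ A) (v : X ⟶ B) (h : u ≫ f = v ≫ g),
    pair u v h ≫ pr0 = u
  pair_pr1 : ∀ {X : C} (u : X ⟶ A) (v : X ⟶ B) (h : u ≫ f = v ≫ g),
    pair u v h ≫ pr1 = v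
  hom_ext : ∀ {X : C} (w w' : X ⟶ P),
    w ≫ pr0 = w' ≫ pr0 → w ≫ pr1 = w' ≫ pr1 → w = w'

/-- Witness that the endofunctor `T` preserves the chosen pullback `PB`. -/
structure PBLift (T : C ⥤ C) {A B Z : C} {f : A ⟶ Z} {g : B ⟶ Z} (PB : ChosenPB f g) where
  pair : ∀ {X : C} (u : X ⟶ T.obj A) (v : X ⟶ T.obj B),
    u ≫ T.map f = v ≫ T.map g → (X ⟶ T.obj PB.P)
  pair_pr0 : ∀ {X : C} (u : X ⟶ T.obj A) (v : X ⟶ T.obj B)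
    (h : u ≫ T.map f = v ≫ T.map g), pair u v h ≫ T.map PB.pr0 = u
  pair_pr1 : ∀ {X : C} (u : X ⟶ T.obj A) (v : X ⟶ T.obj B)
    (h : u ≫ T.map f = v ≫ T.map g), pair u v h ≫ T.map PB.pr1 = v
  hom_ext : ∀ {X : C} (w w' : X ⟶ T.obj PB.P),
    w ≫ T.map PB.pr0 = w' ≫ T.map PB.pr0 → w ≫ T.map PB.pr1 = w' ≫ T.map PB.pr1 → w = w'

/-- The image of a preserved chosen pullback is again a chosen pullback. -/
def PBLift.toChosenPB {T : C ⥤ C} {A B Z : C} {f : A ⟶ Z} {g : B ⟶ Z} {PB : ChosenPB f g}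
    (L : PBLift T PB) : ChosenPB (T.map f) (T.map g) where
  P := T.obj PB.P
  pr0 := T.map PB.pr0
  pr1 := T.map PB.pr1
  comm := by rw [← T.map_comp, ← T.map_comp, PB.comm]
  pair := L.pair
  pair_pr0 := L.pair_pr0
  pair_pr1 := L.pair_pr1
  hom_ext := L.hom_ext

/-- Iterated endofunctor `Tⁿ`. -/
def fpow (T : C ⥤ C) : ℕ → C ⥤ C
  | 0 => 𝟭 C
  | n + 1 => fpow T n ⋙ T

/-- A tangent category in the sense of Cockett–Cruttwell, presented with chosen
pullbacks `T₂M` of `p_M` along itself (preserved by each `Tⁿ`), addition `+`,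
projection `p`, zero `0`, vertical lift `ℓ` and canonical flip `c`, together
with the universality of the vertical lift. Sums, associativity etc. are
expressed in generalized-element form via the chosen pullback pairings. -/
structure TangentCat (C : Type u) [Category.{v} C] where
  T : C ⥤ C
  p : T ⟶ 𝟭 C
  zero : 𝟭 C ⟶ T
  l : T ⟶ T ⋙ T
  c : T ⋙ T ⟶ T ⋙ T
  T2 : ∀ M : C, ChosenPB (p.app M) (p.app M)
  T2T : ∀ M : C, PBLift T (T2 M)
  T2Tn : ∀ (M : C) (n : ℕ), PBLift (fpow T n) (T2 M)
  add : ∀ M : C, (T2 M).P ⟶ T.obj M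
  add_nat : ∀ {M N : C} (f : M ⟶ N) {X : C} (u v : X ⟶ T.obj M)
    (h : u ≫ p.app M = v ≫ p.app M)
    (h' : (u ≫ T.map f) ≫ p.app N = (v ≫ T.map f) ≫ p.app N),
    (T2 M).pair u v h ≫ add M ≫ T.map f
      = (T2 N).pair (u ≫ T.map f) (v ≫ T.map f) h' ≫ add N
  zero_p : ∀ M : C, zero.app M ≫ p.app M = 𝟙 M
  add_p : ∀ M : C, add M ≫ p.app M = (T2 M).pr0 ≫ p.app M
  add_comm' : ∀ (M : C) {X : C} (f g : X ⟶ T.obj M) (h : f ≫ p.app M = g ≫ p.app M),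
    (T2 M).pair f g h ≫ add M = (T2 M).pair g f h.symm ≫ add M
  add_assoc' : ∀ (M : C) {X : C} (f g k : X ⟶ T.obj M)
    (h1 : f ≫ p.app M = g ≫ p.app M) (h2 : g ≫ p.app M = k ≫ p.app M)
    (h3 : ((T2 M).pair f g h1 ≫ add M) ≫ p.app M = k ≫ p.app M)
    (h4 : f ≫ p.app M = ((T2 M).pair g k h2 ≫ add M) ≫ p.app M),
    (T2 M).pair ((T2 M).pair f g h1 ≫ add M) k h3 ≫ add M
      = (T2 M).pair f ((T2 M).pair g k h2 ≫ add M) h4 ≫ add M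
  add_zero' : ∀ (M : C) {X : C} (f : X ⟶ T.obj M)
    (h : f ≫ p.app M = (f ≫ p.app M ≫ zero.app M) ≫ p.app M),
    (T2 M).pair f (f ≫ p.app M ≫ zero.app M) h ≫ add M = f
  l_Tp : ∀ M : C, l.app M ≫ T.map (p.app M) = p.app M ≫ zero.app M
  l_zero : ∀ M : C, zero.app M ≫ l.app M = zero.app M ≫ T.map (zero.app M)
  l_add : ∀ (M : C) {X : C} (f g : X ⟶ T.obj M) (h : f ≫ p.app M = g ≫ p.app M),
    ∃ w : X ⟶ T.obj (T2 M).P,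
      w ≫ T.map (T2 M).pr0 = f ≫ l.app M ∧ w ≫ T.map (T2 M).pr1 = g ≫ l.app M ∧
      (T2 M).pair f g h ≫ add M ≫ l.app M = w ≫ T.map (add M)
  c_p : ∀ M : C, c.app M ≫ p.app (T.obj M) = T.map (p.app M)
  c_zero : ∀ M : C, T.map (zero.app M) ≫ c.app M = zero.app (T.obj M)
  c_add : ∀ (M : C) {X : C} (u v : X ⟶ T.obj (T.obj M))
    (h : u ≫ T.map (p.app M) = v ≫ T.map (p.app M))
    (h' : (u ≫ c.app M) ≫ p.app (T.obj M) = (v ≫ c.app M) ≫ p.app (T.obj M)),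
    ∃ w : X ⟶ T.obj (T2 M).P,
      w ≫ T.map (T2 M).pr0 = u ∧ w ≫ T.map (T2 M).pr1 = v ∧
      w ≫ T.map (add M) ≫ c.app M
        = (T2 (T.obj M)).pair (u ≫ c.app M) (v ≫ c.app M) h' ≫ add (T.obj M)
  l_c : ∀ M : C, l.app M ≫ c.app M = l.app M
  c_c : ∀ M : C, c.app M ≫ c.app M = 𝟙 (T.obj (T.obj M))
  l_l : ∀ M : C, l.app M ≫ T.map (l.app M) = l.app M ≫ l.app (T.obj M)
  c_T_c : ∀ M : C, c.app (T.obj M) ≫ T.map (c.app M) ≫ c.app (T.obj M)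
    = T.map (c.app M) ≫ c.app (T.obj M) ≫ T.map (c.app M)
  l_T_c : ∀ M : C, l.app (T.obj M) ≫ T.map (c.app M) ≫ c.app (T.obj M)
    = c.app M ≫ T.map (l.app M)
  vmu : ∀ M : C, (T2 M).P ⟶ T.obj (T.obj M)
  vmu_spec : ∀ M : C, ∃ w : (T2 M).P ⟶ T.obj (T2 M).P,
    w ≫ T.map (T2 M).pr0 = (T2 M).pr0 ≫ l.app M ∧
    w ≫ T.map (T2 M).pr1 = (T2 M).pr1 ≫ zero.app (T.obj M) ∧
    vmu M = w ≫ T.map (add M)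
  vlift : ∀ {X M : C} (f : X ⟶ T.obj (T.obj M)),
    f ≫ T.map (p.app M) = f ≫ T.map (p.app M) ≫ p.app M ≫ zero.app M → (X ⟶ (T2 M).P)
  vlift_vmu : ∀ {X M : C} (f : X ⟶ T.obj (T.obj M))
    (h : f ≫ T.map (p.app M) = f ≫ T.map (p.app M) ≫ p.app M ≫ zero.app M),
    vlift f h ≫ vmu M = f
  vmu_mono : ∀ {X M : C} (w w' : X ⟶ (T2 M).P), w ≫ vmu M = w' ≫ vmu M → w = w'

/-- Negatives: each tangent bundle is a commutative group bundle. -/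
structure HasNegatives {C : Type u} [Category.{v} C] (D : TangentCat C) where
  neg : ∀ M : C, D.T.obj M ⟶ D.T.obj M
  neg_p : ∀ M : C, neg M ≫ D.p.app M = D.p.app M
  neg_add : ∀ (M : C) {X : C} (f : X ⟶ D.T.obj M)
    (h : f ≫ D.p.app M = (f ≫ neg M) ≫ D.p.app M),
    (D.T2 M).pair f (f ≫ neg M) h ≫ D.add M = f ≫ D.p.app M ≫ D.zero.app M

/-- Fibrewise sum of two maps into a tangent bundle (defined when the maps
agree under `p`; otherwise a default value). -/
noncomputable def TangentCat.hadd (D : TangentCat C) {X M : C}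
    (f g : X ⟶ D.T.obj M) : X ⟶ D.T.obj M :=
  if h : f ≫ D.p.app M = g ≫ D.p.app M then (D.T2 M).pair f g h ≫ D.add M else f

/-- Fibrewise difference `f - g` of two maps into a tangent bundle. -/
noncomputable def TangentCat.sub (D : TangentCat C) (N : HasNegatives D) {X M : C}
    (f g : X ⟶ D.T.obj M) : X ⟶ D.T.obj M :=
  D.hadd f (g ≫ N.neg M)

/-- The bracketing operation `{f}` for the tangent bundle, obtained from the
universality (equalizer property) of the vertical lift. -/
noncomputable def TangentCat.brkT (D : TangentCat C) {X M : C}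
    (f : X ⟶ D.T.obj (D.T.obj M)) : X ⟶ D.T.obj M :=
  if h : f ≫ D.T.map (D.p.app M) = f ≫ D.T.map (D.p.app M) ≫ D.p.app M ≫ D.zero.app M
  then D.vlift f h ≫ (D.T2 M).pr0 else f ≫ D.p.app (D.T.obj M)

/-- The Lie bracket of vector fields: `[w₁,w₂] = {w₁T(w₂) − w₂T(w₁)c}`. -/
noncomputable def TangentCat.lie (D : TangentCat C) (N : HasNegatives D) {M : C}
    (w1 w2 : M ⟶ D.T.obj M) : M ⟶ D.T.obj M :=
  D.brkT (D.sub N (w1 ≫ D.T.map w2) (w2 ≫ D.T.map w1 ≫ D.c.app M))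

/-- A differential bundle `𝗊 = (q, +_q, 0_q, λ)` on `E` over `M` in the tangent
category `D`, with chosen pullbacks `E₂` (of `q` along itself) and
`T(M) ×_M E` (of `p_M` along `q`), both preserved by each `Tⁿ`, together with
the lift axioms and the universality of the lift (in equalizer form). -/
structure DiffBundle {C : Type u} [Category.{v} C] (D : TangentCat C) (E M : C) where
  q : E ⟶ M
  E2 : ChosenPB q q
  TE2 : PBLift D.T E2
  TE2n : ∀ n : ℕ, PBLift (fpow D.T n) E2
  P : ChosenPB (D.p.app M) q
  TP : PBLift D.T P
  TPn : ∀ n : ℕ, PBLift (fpow D.T n) P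
  addq : E2.P ⟶ E
  zeroq : M ⟶ E
  lam : E ⟶ D.T.obj E
  addq_q : addq ≫ q = E2.pr0 ≫ q
  zeroq_q : zeroq ≫ q = 𝟙 M
  addq_comm : ∀ {X : C} (f g : X ⟶ E) (h : f ≫ q = g ≫ q),
    E2.pair f g h ≫ addq = E2.pair g f h.symm ≫ addq
  addq_assoc : ∀ {X : C} (f g k : X ⟶ E)
    (h1 : f ≫ q = g ≫ q) (h2 : g ≫ q = k ≫ q)
    (h3 : (E2.pair f g h1 ≫ addq) ≫ q = k ≫ q)
    (h4 : f ≫ q = (E2.pair g k h2 ≫ addq) ≫ q),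
    E2.pair (E2.pair f g h1 ≫ addq) k h3 ≫ addq
      = E2.pair f (E2.pair g k h2 ≫ addq) h4 ≫ addq
  addq_zero : ∀ {X : C} (f : X ⟶ E) (h : f ≫ q = (f ≫ q ≫ zeroq) ≫ q),
    E2.pair f (f ≫ q ≫ zeroq) h ≫ addq = f
  lam_Tq : lam ≫ D.T.map q = q ≫ D.zero.app M
  lam_zero1 : zeroq ≫ lam = D.zero.app M ≫ D.T.map zeroq
  lam_add1 : ∀ {X : C} (f g : X ⟶ E) (h : f ≫ q = g ≫ q),
    ∃ w : X ⟶ D.T.obj E2.P,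
      w ≫ D.T.map E2.pr0 = f ≫ lam ∧ w ≫ D.T.map E2.pr1 = g ≫ lam ∧
      E2.pair f g h ≫ addq ≫ lam = w ≫ D.T.map addq
  lam_p : lam ≫ D.p.app E = q ≫ zeroq
  lam_zero2 : zeroq ≫ lam = zeroq ≫ D.zero.app E
  lam_add2 : ∀ {X : C} (f g : X ⟶ E) (h : f ≫ q = g ≫ q)
    (h' : (f ≫ lam) ≫ D.p.app E = (g ≫ lam) ≫ D.p.app E),
    E2.pair f g h ≫ addq ≫ lam = (D.T2 E).pair (f ≫ lam) (g ≫ lam) h' ≫ D.add E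
  lam_l : lam ≫ D.l.app E = lam ≫ D.T.map lam
  mu : E2.P ⟶ D.T.obj E
  mu_spec : ∃ w : E2.P ⟶ D.T.obj E2.P,
    w ≫ D.T.map E2.pr0 = E2.pr0 ≫ lam ∧
    w ≫ D.T.map E2.pr1 = E2.pr1 ≫ D.zero.app E ∧
    mu = w ≫ D.T.map addq
  muLift : ∀ {X : C} (f : X ⟶ D.T.obj E),
    f ≫ D.T.map q = f ≫ D.p.app E ≫ q ≫ D.zero.app M → (X ⟶ E2.P)
  muLift_mu : ∀ {X : C} (f : X ⟶ D.T.obj E)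
    (h : f ≫ D.T.map q = f ≫ D.p.app E ≫ q ≫ D.zero.app M),
    muLift f h ≫ mu = f
  muLift_q : ∀ {X : C} (f : X ⟶ D.T.obj E)
    (h : f ≫ D.T.map q = f ≫ D.p.app E ≫ q ≫ D.zero.app M),
    muLift f h ≫ E2.pr0 ≫ q = f ≫ D.p.app E ≫ q
  mu_mono : ∀ {X : C} (w w' : X ⟶ E2.P), w ≫ mu = w' ≫ mu → w = w'

/-- The bracketing operation `{f}` for a differential bundle. -/
noncomputable def DiffBundle.brk {D : TangentCat C} {E M : C} (B : DiffBundle D E M)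
    {X : C} (f : X ⟶ D.T.obj E) : X ⟶ E :=
  if h : f ≫ D.T.map B.q = f ≫ D.p.app E ≫ B.q ≫ D.zero.app M
  then B.muLift f h ≫ B.E2.pr0 else f ≫ D.p.app E

/-- Negatives for a differential bundle (the fibrewise group structure). -/
structure BundleNegatives {D : TangentCat C} {E M : C} (B : DiffBundle D E M) where
  neg : E ⟶ E
  neg_q : neg ≫ B.q = B.q
  neg_add : ∀ {X : C} (f : X ⟶ E) (h : f ≫ B.q = (f ≫ neg) ≫ B.q),
    B.E2.pair f (f ≫ neg) h ≫ B.addq = f ≫ B.q ≫ B.zeroq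

/-- Fibrewise sum of maps into `E` for the bundle addition `+_q`. -/
noncomputable def DiffBundle.qadd {D : TangentCat C} {E M : C} (B : DiffBundle D E M)
    {X : C} (f g : X ⟶ E) : X ⟶ E :=
  if h : f ≫ B.q = g ≫ B.q then B.E2.pair f g h ≫ B.addq else f

/-- Fibrewise difference of maps into `E` for the bundle addition `+_q`. -/
noncomputable def DiffBundle.qsub {D : TangentCat C} {E M : C} (B : DiffBundle D E M)
    (NB : BundleNegatives B) {X : C} (f g : X ⟶ E) : X ⟶ E :=
  B.qadd f (g ≫ NB.neg)

/-- The horizontal descent `U = ⟨T(q), p⟩ : T(E) ⟶ T(M) ×_M E`. -/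
def TangentCat.hdesc (D : TangentCat C) {E M : C} (q : E ⟶ M)
    (P : ChosenPB (D.p.app M) q) : D.T.obj E ⟶ P.P :=
  P.pair (D.T.map q) (D.p.app E) (by simpa using D.p.naturality q)

/-- A vertical connection on the differential bundle with projection `q` and
lift `lam`: a retraction `K` of `lam` with `Kq = pq`, `Kλ = ℓT(K)` and
`Kλ = T(λ)cT(K)` (equivalently, `(K,p)` and `(K,q)` are linear bundle
morphisms). -/
def IsVerticalConnection (D : TangentCat C) {E M : C} (q : E ⟶ M)
    (lam : E ⟶ D.T.obj E) (K : D.T.obj E ⟶ E) : Prop :=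
  lam ≫ K = 𝟙 E ∧
  K ≫ q = D.p.app E ≫ q ∧
  K ≫ lam = D.l.app E ≫ D.T.map K ∧
  K ≫ lam = D.T.map lam ≫ D.c.app E ≫ D.T.map K

/-- Flatness of a vertical connection: `cT(K)K = T(K)K`. -/
def IsFlat (D : TangentCat C) {E : C} (K : D.T.obj E ⟶ E) : Prop :=
  D.c.app E ≫ D.T.map K ≫ K = D.T.map K ≫ K

/-- A horizontal connection on the differential bundle with projection `q`,
lift `lam` and horizontal pullback `P = T(M) ×_M E`: a section `H` of the
horizontal descent `U = ⟨T(q),p⟩` with `Hℓ = (ℓ×0)T(H)` and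
`HT(λ)c = (0×λ)T(H)` (equivalently, `(H,1)` is linear into `p_E` and into
`T(𝗊)`). -/
def IsHorizontalConnection (D : TangentCat C) {E M : C} (q : E ⟶ M)
    (lam : E ⟶ D.T.obj E) (P : ChosenPB (D.p.app M) q)
    (H : P.P ⟶ D.T.obj E) : Prop :=
  H ≫ D.T.map q = P.pr0 ∧
  H ≫ D.p.app E = P.pr1 ∧
  (∃ w : P.P ⟶ D.T.obj P.P,
    w ≫ D.T.map P.pr0 = P.pr0 ≫ D.l.app M ∧
    w ≫ D.T.map P.pr1 = P.pr1 ≫ D.zero.app E ∧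
    H ≫ D.l.app E = w ≫ D.T.map H) ∧
  (∃ w : P.P ⟶ D.T.obj P.P,
    w ≫ D.T.map P.pr0 = P.pr0 ≫ D.zero.app (D.T.obj M) ∧
    w ≫ D.T.map P.pr1 = P.pr1 ≫ lam ∧
    H ≫ D.T.map lam ≫ D.c.app E = w ≫ D.T.map H)

/-- A (full) connection, in unbundled form: a vertical connection `K` and a
horizontal connection `H` with `HK = π₁q0_q` and `⟨K,p⟩μ + UH = 1`. -/
noncomputable def IsConnectionPair (D : TangentCat C) {E M : C} (q : E ⟶ M)
    (lam : E ⟶ D.T.obj E) (EP : ChosenPB q q) (zeroq : M ⟶ E)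
    (mu : EP.P ⟶ D.T.obj E) (P : ChosenPB (D.p.app M) q)
    (K : D.T.obj E ⟶ E) (H : P.P ⟶ D.T.obj E) : Prop :=
  IsVerticalConnection D q lam K ∧
  IsHorizontalConnection D q lam P H ∧
  H ≫ K = P.pr1 ≫ q ≫ zeroq ∧
  ∃ R : D.T.obj E ⟶ EP.P, R ≫ EP.pr0 = K ∧ R ≫ EP.pr1 = D.p.app E ∧
    D.hadd (R ≫ mu) (D.hdesc q P ≫ H) = 𝟙 (D.T.obj E)

/-- A connection on a differential bundle. -/
noncomputable def IsConnection {D : TangentCat C} {E M : C} (B : DiffBundle D E M)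
    (K : D.T.obj E ⟶ E) (H : B.P.P ⟶ D.T.obj E) : Prop :=
  IsConnectionPair D B.q B.lam B.E2 B.zeroq B.mu B.P K H

/-- A Finsler connection on a differential bundle. -/
def IsFinslerConnection {D : TangentCat C} {E M : C} (B : DiffBundle D E M)
    (R : D.T.obj E ⟶ B.E2.P) : Prop :=
  B.mu ≫ R = 𝟙 B.E2.P ∧
  R ≫ B.E2.pr1 = D.p.app E ∧
  R ≫ B.E2.pr0 ≫ B.lam = D.T.map B.lam ≫ D.c.app E ≫ D.T.map (R ≫ B.E2.pr0) ∧
  D.l.app E ≫ D.T.map (R ≫ B.E2.pr0) = R ≫ B.E2.pr0 ≫ B.lam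

/-- The covariant derivative `∇_K(w,s) = wT(s)K`. -/
def nabla (D : TangentCat C) {E M : C} (K : D.T.obj E ⟶ E)
    (w : M ⟶ D.T.obj M) (s : M ⟶ E) : M ⟶ E :=
  w ≫ D.T.map s ≫ K

section Stmt14Aux

theorem ChosenPB.pair_pr0_assoc {A B Z : C} {f : A ⟶ Z} {g : B ⟶ Z} (PB : ChosenPB f g)
    {X W : C} (u : X ⟶ A) (v : X ⟶ B) (h : u ≫ f = v ≫ g) (k : A ⟶ W) :
    PB.pair u v h ≫ PB.pr0 ≫ k = u ≫ k := by
  rw [← Category.assoc, PB.pair_pr0]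

theorem ChosenPB.pair_pr1_assoc {A B Z : C} {f : A ⟶ Z} {g : B ⟶ Z} (PB : ChosenPB f g)
    {X W : C} (u : X ⟶ A) (v : X ⟶ B) (h : u ≫ f = v ≫ g) (k : B ⟶ W) :
    PB.pair u v h ≫ PB.pr1 ≫ k = v ≫ k := by
  rw [← Category.assoc, PB.pair_pr1]

theorem ChosenPB.comp_pair {A B Z : C} {f : A ⟶ Z} {g : B ⟶ Z} (PB : ChosenPB f g)
    {X Y : C} (w : Y ⟶ X) (u : X ⟶ A) (v : X ⟶ B) (h : u ≫ f = v ≫ g)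
    (h' : (w ≫ u) ≫ f = (w ≫ v) ≫ g) :
    w ≫ PB.pair u v h = PB.pair (w ≫ u) (w ≫ v) h' := by
  apply PB.hom_ext
  · rw [Category.assoc, PB.pair_pr0, PB.pair_pr0]
  · rw [Category.assoc, PB.pair_pr1, PB.pair_pr1]

theorem ChosenPB.pair_congr {A B Z : C} {f : A ⟶ Z} {g : B ⟶ Z} (PB : ChosenPB f g)
    {X : C} {u u' : X ⟶ A} {v v' : X ⟶ B} (hu : u = u') (hv : v = v')
    (h : u ≫ f = v ≫ g) (h' : u' ≫ f = v' ≫ g) :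
    PB.pair u v h = PB.pair u' v' h' := by subst hu; subst hv; rfl

theorem ChosenPB.pair_id {A B Z : C} {f : A ⟶ Z} {g : B ⟶ Z} (PB : ChosenPB f g) :
    PB.pair PB.pr0 PB.pr1 PB.comm = 𝟙 PB.P := by
  apply PB.hom_ext
  · rw [PB.pair_pr0, Category.id_comp]
  · rw [PB.pair_pr1, Category.id_comp]

theorem TangentCat.p_nat (D : TangentCat C) {A B : C} (f : A ⟶ B) :
    D.T.map f ≫ D.p.app B = D.p.app A ≫ f := by simpa using D.p.naturality f

theorem TangentCat.zero_nat (D : TangentCat C) {A B : C} (f : A ⟶ B) :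
    f ≫ D.zero.app B = D.zero.app A ≫ D.T.map f := by simpa using D.zero.naturality f

theorem TangentCat.l_nat (D : TangentCat C) {A B : C} (f : A ⟶ B) :
    D.T.map f ≫ D.l.app B = D.l.app A ≫ D.T.map (D.T.map f) := by
  simpa using D.l.naturality f

theorem TangentCat.l_p (D : TangentCat C) (M : C) :
    D.l.app M ≫ D.p.app (D.T.obj M) = D.p.app M ≫ D.zero.app M := by
  conv_lhs => rw [← D.l_c M]
  rw [Category.assoc, D.c_p M, D.l_Tp M]

variable {D : TangentCat C} {E M : C}

theorem DiffBundle.mu_char (B : DiffBundle D E M) {X : C} (x y : X ⟶ E)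
    (hxy : x ≫ B.q = y ≫ B.q) (w : X ⟶ D.T.obj B.E2.P)
    (h0 : w ≫ D.T.map B.E2.pr0 = x ≫ B.lam)
    (h1 : w ≫ D.T.map B.E2.pr1 = y ≫ D.zero.app E) :
    B.E2.pair x y hxy ≫ B.mu = w ≫ D.T.map B.addq := by
  obtain ⟨w', hw0, hw1, hmu⟩ := B.mu_spec
  have hww : B.E2.pair x y hxy ≫ w' = w := by
    apply B.TE2.hom_ext
    · rw [Category.assoc, hw0, h0, ← Category.assoc, B.E2.pair_pr0]
    · rw [Category.assoc, hw1, h1, ← Category.assoc, B.E2.pair_pr1]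
  rw [hmu, ← Category.assoc, hww]

theorem DiffBundle.lam_via_mu (B : DiffBundle D E M) {X : C} (x : X ⟶ E)
    (hx : x ≫ B.q = (x ≫ B.q ≫ B.zeroq) ≫ B.q) :
    B.E2.pair x (x ≫ B.q ≫ B.zeroq) hx ≫ B.mu = x ≫ B.lam := by
  obtain ⟨w, hw0, hw1, hsum⟩ := B.lam_add1 x (x ≫ B.q ≫ B.zeroq) hx
  have h1 : w ≫ D.T.map B.E2.pr1 = (x ≫ B.q ≫ B.zeroq) ≫ D.zero.app E := by
    rw [hw1, Category.assoc, Category.assoc, B.lam_zero2, Category.assoc, Category.assoc]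
  rw [B.mu_char x (x ≫ B.q ≫ B.zeroq) hx w hw0 h1, ← hsum, ← Category.assoc,
    B.addq_zero x hx]

theorem DiffBundle.lam_mono (B : DiffBundle D E M) {X : C} {x y : X ⟶ E}
    (hxy : x ≫ B.lam = y ≫ B.lam) : x = y := by
  have hx : x ≫ B.q = (x ≫ B.q ≫ B.zeroq) ≫ B.q := by
    simp [Category.assoc, B.zeroq_q]
  have hy : y ≫ B.q = (y ≫ B.q ≫ B.zeroq) ≫ B.q := by
    simp [Category.assoc, B.zeroq_q]
  have e : B.E2.pair x (x ≫ B.q ≫ B.zeroq) hx = B.E2.pair y (y ≫ B.q ≫ B.zeroq) hy :=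
    B.mu_mono _ _ (by rw [B.lam_via_mu x hx, B.lam_via_mu y hy, hxy])
  have := congrArg (· ≫ B.E2.pr0) e
  simpa [B.E2.pair_pr0] using this

theorem DiffBundle.mu_p (B : DiffBundle D E M) : B.mu ≫ D.p.app E = B.E2.pr1 := by
  obtain ⟨w', hw0, hw1, hmu⟩ := B.mu_spec
  have hc : (B.E2.pr0 ≫ B.q ≫ B.zeroq) ≫ B.q = B.E2.pr1 ≫ B.q := by
    simp [Category.assoc, B.zeroq_q, B.E2.comm]
  have hwp : w' ≫ D.p.app B.E2.P = B.E2.pair (B.E2.pr0 ≫ B.q ≫ B.zeroq) B.E2.pr1 hc := by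
    apply B.E2.hom_ext
    · rw [B.E2.pair_pr0, Category.assoc, ← D.p_nat B.E2.pr0, ← Category.assoc, hw0,
        Category.assoc, B.lam_p]
    · rw [B.E2.pair_pr1, Category.assoc, ← D.p_nat B.E2.pr1, ← Category.assoc, hw1,
        Category.assoc, D.zero_p, Category.comp_id]
  have hc2 : (B.E2.pr1 ≫ B.q ≫ B.zeroq) ≫ B.q = B.E2.pr0 ≫ B.q := by
    simp [Category.assoc, B.zeroq_q, B.E2.comm]
  have heq : B.E2.pr0 ≫ B.q ≫ B.zeroq = B.E2.pr1 ≫ B.q ≫ B.zeroq := by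
    rw [← Category.assoc, B.E2.comm, Category.assoc]
  rw [hmu, Category.assoc, D.p_nat B.addq, ← Category.assoc, hwp,
    B.addq_comm _ _ hc, B.E2.pair_congr rfl heq hc.symm
      (by rw [← heq]; exact hc.symm), B.addq_zero B.E2.pr1 (by rw [← heq]; exact hc.symm)]

theorem DiffBundle.mu_Tq (B : DiffBundle D E M) :
    B.mu ≫ D.T.map B.q = B.E2.pr0 ≫ B.q ≫ D.zero.app M := by
  obtain ⟨w', hw0, hw1, hmu⟩ := B.mu_spec
  rw [hmu, Category.assoc, ← D.T.map_comp, B.addq_q, D.T.map_comp, ← Category.assoc, hw0,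
    Category.assoc, B.lam_Tq]

theorem TangentCat.c_Tp (D : TangentCat C) (M : C) :
    D.c.app M ≫ D.T.map (D.p.app M) = D.p.app (D.T.obj M) := by
  rw [← D.c_p M, ← Category.assoc, D.c_c M]
  simp

variable {D : TangentCat C} {E M : C}

theorem TangentCat.comp_Tf_p (D : TangentCat C) {X A B : C} (f : A ⟶ B)
    {u v : X ⟶ D.T.obj A} (h : u ≫ D.p.app A = v ≫ D.p.app A) :
    (u ≫ D.T.map f) ≫ D.p.app B = (v ≫ D.T.map f) ≫ D.p.app B := by
  rw [Category.assoc, D.p_nat f, ← Category.assoc, h, Category.assoc, ← D.p_nat f,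
    ← Category.assoc]

theorem DiffBundle.lamp_eq (B : DiffBundle D E M) {X : C} {f g : X ⟶ E}
    (h : f ≫ B.q = g ≫ B.q) :
    (f ≫ B.lam) ≫ D.p.app E = (g ≫ B.lam) ≫ D.p.app E := by
  rw [Category.assoc, B.lam_p, Category.assoc, B.lam_p, ← Category.assoc, h, Category.assoc]

theorem DiffBundle.zeroE_K (B : DiffBundle D E M) (K : D.T.obj E ⟶ E)
    (hK1 : K ≫ B.lam = D.l.app E ≫ D.T.map K)
    (hKq : K ≫ B.q = D.p.app E ≫ B.q) :
    D.zero.app E ≫ K = B.q ≫ B.zeroq := by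
  have hgq : (D.zero.app E ≫ K) ≫ B.q = B.q := by
    rw [Category.assoc, hKq, ← Category.assoc, D.zero_p]
    simp
  have hgl : (D.zero.app E ≫ K) ≫ B.lam = (D.zero.app E ≫ K) ≫ D.zero.app E := by
    rw [Category.assoc, hK1, ← Category.assoc, D.l_zero E, Category.assoc, ← D.T.map_comp,
      ← D.zero_nat (show E ⟶ E from D.zero.app E ≫ K)]
  calc D.zero.app E ≫ K
      = ((D.zero.app E ≫ K) ≫ D.zero.app E) ≫ D.p.app E := by
        rw [Category.assoc, D.zero_p]
        simp
    _ = ((D.zero.app E ≫ K) ≫ B.lam) ≫ D.p.app E := by rw [hgl]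
    _ = (D.zero.app E ≫ K) ≫ B.q ≫ B.zeroq := by rw [Category.assoc, B.lam_p]
    _ = B.q ≫ B.zeroq := by rw [← Category.assoc, hgq]

theorem DiffBundle.addq_lam (B : DiffBundle D E M) :
    B.addq ≫ B.lam = (D.T2 E).pair (B.E2.pr0 ≫ B.lam) (B.E2.pr1 ≫ B.lam)
      (B.lamp_eq B.E2.comm) ≫ D.add E := by
  have h := B.lam_add2 B.E2.pr0 B.E2.pr1 B.E2.comm (B.lamp_eq B.E2.comm)
  rw [B.E2.pair_id, Category.id_comp] at h
  exact h

theorem DiffBundle.addE_K (B : DiffBundle D E M) (K : D.T.obj E ⟶ E)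
    (hK1 : K ≫ B.lam = D.l.app E ≫ D.T.map K)
    (hKq : K ≫ B.q = D.p.app E ≫ B.q)
    (hc : ((D.T2 E).pr0 ≫ K) ≫ B.q = ((D.T2 E).pr1 ≫ K) ≫ B.q) :
    D.add E ≫ K = B.E2.pair ((D.T2 E).pr0 ≫ K) ((D.T2 E).pr1 ≫ K) hc ≫ B.addq := by
  apply B.lam_mono
  -- the l_add witness for the identity pair
  obtain ⟨w, hw0, hw1, hwadd⟩ := D.l_add E (D.T2 E).pr0 (D.T2 E).pr1 (D.T2 E).comm
  rw [(D.T2 E).pair_id, Category.id_comp] at hwadd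
  -- compatibility proofs
  have hu : ((D.T2 E).pr0 ≫ D.l.app E) ≫ D.T.map (D.p.app E)
      = ((D.T2 E).pr1 ≫ D.l.app E) ≫ D.T.map (D.p.app E) := by
    simp only [Category.assoc, D.l_Tp, reassoc_of% (D.T2 E).comm]
  have hu' : ((D.T2 E).pr0 ≫ D.l.app E) ≫ D.p.app (D.T.obj E)
      = ((D.T2 E).pr1 ≫ D.l.app E) ≫ D.p.app (D.T.obj E) := by
    simp only [Category.assoc, D.l_p, reassoc_of% (D.T2 E).comm]
  have hB : (((D.T2 E).pr0 ≫ D.l.app E) ≫ D.c.app E) ≫ D.p.app (D.T.obj E)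
      = (((D.T2 E).pr1 ≫ D.l.app E) ≫ D.c.app E) ≫ D.p.app (D.T.obj E) := by
    simp only [Category.assoc, reassoc_of% (D.l_c E), D.l_p, reassoc_of% (D.T2 E).comm]
  obtain ⟨w2, hw20, hw21, hw2add⟩ :=
    D.c_add E ((D.T2 E).pr0 ≫ D.l.app E) ((D.T2 E).pr1 ≫ D.l.app E) hu hB
  have hww2 : w2 = w :=
    (D.T2T E).hom_ext _ _ (by rw [hw20, hw0]) (by rw [hw21, hw1])
  have e1 : (D.T2 (D.T.obj E)).pair (((D.T2 E).pr0 ≫ D.l.app E) ≫ D.c.app E)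
      (((D.T2 E).pr1 ≫ D.l.app E) ≫ D.c.app E) hB
      = (D.T2 (D.T.obj E)).pair ((D.T2 E).pr0 ≫ D.l.app E)
        ((D.T2 E).pr1 ≫ D.l.app E) hu' :=
    (D.T2 (D.T.obj E)).pair_congr (by rw [Category.assoc, D.l_c])
      (by rw [Category.assoc, D.l_c]) _ _
  have e1' : (D.T2 (D.T.obj E)).pair (((D.T2 E).pr0 ≫ D.l.app E) ≫ D.c.app E)
      (((D.T2 E).pr1 ≫ D.l.app E) ≫ D.c.app E) hB ≫ D.add (D.T.obj E)
      = (D.T2 (D.T.obj E)).pair ((D.T2 E).pr0 ≫ D.l.app E)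
        ((D.T2 E).pr1 ≫ D.l.app E) hu' ≫ D.add (D.T.obj E) :=
    congrArg (· ≫ D.add (D.T.obj E)) e1
  have step3 : w2 ≫ D.T.map (D.add E) ≫ D.c.app E = D.add E ≫ D.l.app E := by
    rw [hww2, ← Category.assoc, ← hwadd, Category.assoc, D.l_c]
  have hkey : (D.T2 (D.T.obj E)).pair ((D.T2 E).pr0 ≫ D.l.app E)
      ((D.T2 E).pr1 ≫ D.l.app E) hu' ≫ D.add (D.T.obj E) = D.add E ≫ D.l.app E :=
    e1'.symm.trans (hw2add.symm.trans step3)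
  have e0 : ((D.T2 E).pr0 ≫ K) ≫ B.lam = ((D.T2 E).pr0 ≫ D.l.app E) ≫ D.T.map K := by
    rw [Category.assoc, hK1, Category.assoc]
  have e2 : ((D.T2 E).pr1 ≫ K) ≫ B.lam = ((D.T2 E).pr1 ≫ D.l.app E) ≫ D.T.map K := by
    rw [Category.assoc, hK1, Category.assoc]
  have hc2 := D.comp_Tf_p K hu'
  have E1 : (D.add E ≫ K) ≫ B.lam = D.add E ≫ D.l.app E ≫ D.T.map K := by
    rw [Category.assoc, hK1]
  have E2 : D.add E ≫ D.l.app E ≫ D.T.map K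
      = (D.T2 (D.T.obj E)).pair ((D.T2 E).pr0 ≫ D.l.app E)
          ((D.T2 E).pr1 ≫ D.l.app E) hu' ≫ D.add (D.T.obj E) ≫ D.T.map K :=
    ((reassoc_of% hkey) (D.T.map K)).symm
  have E3 : (D.T2 (D.T.obj E)).pair ((D.T2 E).pr0 ≫ D.l.app E)
        ((D.T2 E).pr1 ≫ D.l.app E) hu' ≫ D.add (D.T.obj E) ≫ D.T.map K
      = (D.T2 E).pair (((D.T2 E).pr0 ≫ D.l.app E) ≫ D.T.map K)
          (((D.T2 E).pr1 ≫ D.l.app E) ≫ D.T.map K) hc2 ≫ D.add E :=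
    D.add_nat K _ _ hu' hc2
  have E4 : (D.T2 E).pair (((D.T2 E).pr0 ≫ D.l.app E) ≫ D.T.map K)
        (((D.T2 E).pr1 ≫ D.l.app E) ≫ D.T.map K) hc2 ≫ D.add E
      = (D.T2 E).pair (((D.T2 E).pr0 ≫ K) ≫ B.lam) (((D.T2 E).pr1 ≫ K) ≫ B.lam)
          (B.lamp_eq hc) ≫ D.add E :=
    congrArg (· ≫ D.add E) ((D.T2 E).pair_congr e0.symm e2.symm _ _)
  have E5 : (D.T2 E).pair (((D.T2 E).pr0 ≫ K) ≫ B.lam) (((D.T2 E).pr1 ≫ K) ≫ B.lam)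
        (B.lamp_eq hc) ≫ D.add E
      = (B.E2.pair ((D.T2 E).pr0 ≫ K) ((D.T2 E).pr1 ≫ K) hc ≫ B.addq) ≫ B.lam :=
    (B.lam_add2 _ _ hc (B.lamp_eq hc)).symm.trans (Category.assoc _ _ _).symm
  exact E1.trans (E2.trans (E3.trans (E4.trans E5)))
theorem DiffBundle.Taddq_K (B : DiffBundle D E M) (K : D.T.obj E ⟶ E)
    (hK2 : K ≫ B.lam = D.T.map B.lam ≫ D.c.app E ≫ D.T.map K)
    (hc : (D.T.map B.E2.pr0 ≫ K) ≫ B.q = (D.T.map B.E2.pr1 ≫ K) ≫ B.q) :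
    D.T.map B.addq ≫ K
      = B.E2.pair (D.T.map B.E2.pr0 ≫ K) (D.T.map B.E2.pr1 ≫ K) hc ≫ B.addq := by
  apply B.lam_mono
  have hbase : (B.E2.pr0 ≫ B.lam) ≫ D.p.app E = (B.E2.pr1 ≫ B.lam) ≫ D.p.app E :=
    B.lamp_eq B.E2.comm
  -- compatibility for c_add
  have hA : D.T.map (B.E2.pr0 ≫ B.lam) ≫ D.T.map (D.p.app E)
      = D.T.map (B.E2.pr1 ≫ B.lam) ≫ D.T.map (D.p.app E) := by
    rw [← D.T.map_comp, ← D.T.map_comp]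
    exact congrArg D.T.map hbase
  have hBc : (D.T.map (B.E2.pr0 ≫ B.lam) ≫ D.c.app E) ≫ D.p.app (D.T.obj E)
      = (D.T.map (B.E2.pr1 ≫ B.lam) ≫ D.c.app E) ≫ D.p.app (D.T.obj E) := by
    rw [Category.assoc, Category.assoc, D.c_p]
    exact hA
  obtain ⟨w3, h30, h31, h3add⟩ :=
    D.c_add E (D.T.map (B.E2.pr0 ≫ B.lam)) (D.T.map (B.E2.pr1 ≫ B.lam)) hA hBc
  -- identify w3 with the T-image of the pair
  have hw3 : w3 = D.T.map ((D.T2 E).pair (B.E2.pr0 ≫ B.lam) (B.E2.pr1 ≫ B.lam) hbase) := by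
    apply (D.T2T E).hom_ext
    · rw [h30, ← D.T.map_comp, (D.T2 E).pair_pr0]
    · rw [h31, ← D.T.map_comp, (D.T2 E).pair_pr1]
  rw [hw3] at h3add
  -- h3add : T(pair) ≫ T(add E) ≫ c = pair (T(pr0≫lam)≫c) (T(pr1≫lam)≫c) ≫ add (TE)
  have hcadd : (D.T.map (B.E2.pr0 ≫ B.lam) ≫ D.c.app E) ≫ D.p.app (D.T.obj E)
      = (D.T.map (B.E2.pr1 ≫ B.lam) ≫ D.c.app E) ≫ D.p.app (D.T.obj E) := hBc
  have hc2 := D.comp_Tf_p K hcadd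
  -- LHS chain
  have L1 : (D.T.map B.addq ≫ K) ≫ B.lam
      = D.T.map (B.addq ≫ B.lam) ≫ D.c.app E ≫ D.T.map K := by
    rw [Category.assoc, hK2, D.T.map_comp]
    simp only [Category.assoc]
  have L2 : D.T.map (B.addq ≫ B.lam) ≫ D.c.app E ≫ D.T.map K
      = (D.T.map ((D.T2 E).pair (B.E2.pr0 ≫ B.lam) (B.E2.pr1 ≫ B.lam) hbase)
          ≫ D.T.map (D.add E)) ≫ D.c.app E ≫ D.T.map K := by
    rw [← D.T.map_comp, B.addq_lam]
  have L3 : (D.T.map ((D.T2 E).pair (B.E2.pr0 ≫ B.lam) (B.E2.pr1 ≫ B.lam) hbase)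
        ≫ D.T.map (D.add E)) ≫ D.c.app E ≫ D.T.map K
      = ((D.T2 (D.T.obj E)).pair (D.T.map (B.E2.pr0 ≫ B.lam) ≫ D.c.app E)
          (D.T.map (B.E2.pr1 ≫ B.lam) ≫ D.c.app E) hBc ≫ D.add (D.T.obj E)) ≫ D.T.map K := by
    rw [← Category.assoc ((D.T.map _) ≫ (D.T.map _)) (D.c.app E) (D.T.map K)]
    rw [Category.assoc (D.T.map _) (D.T.map _) (D.c.app E), h3add]
  have L4 : ((D.T2 (D.T.obj E)).pair (D.T.map (B.E2.pr0 ≫ B.lam) ≫ D.c.app E)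
        (D.T.map (B.E2.pr1 ≫ B.lam) ≫ D.c.app E) hBc ≫ D.add (D.T.obj E)) ≫ D.T.map K
      = (D.T2 E).pair ((D.T.map (B.E2.pr0 ≫ B.lam) ≫ D.c.app E) ≫ D.T.map K)
          ((D.T.map (B.E2.pr1 ≫ B.lam) ≫ D.c.app E) ≫ D.T.map K) hc2 ≫ D.add E :=
    (Category.assoc _ _ _).trans (D.add_nat K _ _ hBc hc2)
  -- RHS via lam_add2
  have e0 : (D.T.map B.E2.pr0 ≫ K) ≫ B.lam
      = (D.T.map (B.E2.pr0 ≫ B.lam) ≫ D.c.app E) ≫ D.T.map K := by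
    rw [Category.assoc, hK2, D.T.map_comp]
    simp only [Category.assoc]
  have e2 : (D.T.map B.E2.pr1 ≫ K) ≫ B.lam
      = (D.T.map (B.E2.pr1 ≫ B.lam) ≫ D.c.app E) ≫ D.T.map K := by
    rw [Category.assoc, hK2, D.T.map_comp]
    simp only [Category.assoc]
  have E4 : (D.T2 E).pair ((D.T.map (B.E2.pr0 ≫ B.lam) ≫ D.c.app E) ≫ D.T.map K)
        ((D.T.map (B.E2.pr1 ≫ B.lam) ≫ D.c.app E) ≫ D.T.map K) hc2 ≫ D.add E
      = (D.T2 E).pair ((D.T.map B.E2.pr0 ≫ K) ≫ B.lam) ((D.T.map B.E2.pr1 ≫ K) ≫ B.lam)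
          (B.lamp_eq hc) ≫ D.add E :=
    congrArg (· ≫ D.add E) ((D.T2 E).pair_congr e0.symm e2.symm _ _)
  have E5 : (D.T2 E).pair ((D.T.map B.E2.pr0 ≫ K) ≫ B.lam) ((D.T.map B.E2.pr1 ≫ K) ≫ B.lam)
        (B.lamp_eq hc) ≫ D.add E
      = (B.E2.pair (D.T.map B.E2.pr0 ≫ K) (D.T.map B.E2.pr1 ≫ K) hc ≫ B.addq) ≫ B.lam :=
    (B.lam_add2 _ _ hc (B.lamp_eq hc)).symm.trans (Category.assoc _ _ _).symm
  exact L1.trans (L2.trans (L3.trans (L4.trans (E4.trans E5))))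

theorem DiffBundle.mu_K (B : DiffBundle D E M) (K : D.T.obj E ⟶ E)
    (hlamK : B.lam ≫ K = 𝟙 E)
    (hK1 : K ≫ B.lam = D.l.app E ≫ D.T.map K)
    (hK2 : K ≫ B.lam = D.T.map B.lam ≫ D.c.app E ≫ D.T.map K)
    (hKq : K ≫ B.q = D.p.app E ≫ B.q) :
    B.mu ≫ K = B.E2.pr0 := by
  have hc : (D.T.map B.E2.pr0 ≫ K) ≫ B.q = (D.T.map B.E2.pr1 ≫ K) ≫ B.q := by
    rw [Category.assoc, hKq, Category.assoc, hKq, ← Category.assoc, D.p_nat B.E2.pr0,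
      ← Category.assoc, D.p_nat B.E2.pr1, Category.assoc, Category.assoc, B.E2.comm]
  apply B.lam_mono
  obtain ⟨w', hw0, hw1, hmu⟩ := B.mu_spec
  have hW0 : (w' ≫ D.l.app B.E2.P
        ≫ D.T.map (B.E2.pair (D.T.map B.E2.pr0 ≫ K) (D.T.map B.E2.pr1 ≫ K) hc))
      ≫ D.T.map B.E2.pr0 = B.E2.pr0 ≫ B.lam := by
    rw [Category.assoc, Category.assoc, ← D.T.map_comp, B.E2.pair_pr0, D.T.map_comp]
    rw [← (reassoc_of% (D.l_nat B.E2.pr0)) (D.T.map K)]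
    rw [(reassoc_of% hw0) (D.l.app E ≫ D.T.map K)]
    rw [(reassoc_of% B.lam_l) (D.T.map K)]
    rw [← D.T.map_comp, hlamK, D.T.map_id, Category.comp_id]
  have hW1 : (w' ≫ D.l.app B.E2.P
        ≫ D.T.map (B.E2.pair (D.T.map B.E2.pr0 ≫ K) (D.T.map B.E2.pr1 ≫ K) hc))
      ≫ D.T.map B.E2.pr1 = (B.E2.pr0 ≫ B.q ≫ B.zeroq) ≫ D.zero.app E := by
    rw [Category.assoc, Category.assoc, ← D.T.map_comp, B.E2.pair_pr1, D.T.map_comp]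
    rw [← (reassoc_of% (D.l_nat B.E2.pr1)) (D.T.map K)]
    rw [(reassoc_of% hw1) (D.l.app E ≫ D.T.map K)]
    rw [(reassoc_of% (D.l_zero E)) (D.T.map K)]
    rw [← D.T.map_comp, B.zeroE_K K hK1 hKq]
    rw [← D.zero_nat (B.q ≫ B.zeroq)]
    simp only [← Category.assoc]
    rw [← B.E2.comm]
  have hx : B.E2.pr0 ≫ B.q = (B.E2.pr0 ≫ B.q ≫ B.zeroq) ≫ B.q := by
    simp [Category.assoc, B.zeroq_q]
  have hmc := B.mu_char B.E2.pr0 (B.E2.pr0 ≫ B.q ≫ B.zeroq) hx _ hW0 hW1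
  have hWadd := hmc.symm.trans (B.lam_via_mu B.E2.pr0 hx)
  rw [Category.assoc, hK1, hmu]
  simp only [Category.assoc]
  rw [(reassoc_of% (D.l_nat B.addq)) (D.T.map K), ← D.T.map_comp,
    B.Taddq_K K hK2 hc, D.T.map_comp, ← hWadd]
  simp only [Category.assoc]

end Stmt14Aux

/-- If a differential bundle `𝗊` has a connection `(K,H)`,
then the cone `K : T(E) → E`, `T(q) : T(E) → T(M)`, `p : T(E) → E` exhibits
`T(E)` as the fibred product over `M` of `q`, `p_M`, `q`. -/
theorem stmt14 (D : TangentCat C) {E M : C} (B : DiffBundle D E M)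
    (K : D.T.obj E ⟶ E) (H : B.P.P ⟶ D.T.obj E) (hconn : IsConnection B K H)
    {X : C} (f0 : X ⟶ E) (f1 : X ⟶ D.T.obj M) (f2 : X ⟶ E)
    (h01 : f0 ≫ B.q = f1 ≫ D.p.app M) (h21 : f2 ≫ B.q = f1 ≫ D.p.app M) :
    ∃! h : X ⟶ D.T.obj E,
      h ≫ K = f0 ∧ h ≫ D.T.map B.q = f1 ∧ h ≫ D.p.app E = f2 := by
  have hconn' : IsConnectionPair D B.q B.lam B.E2 B.zeroq B.mu B.P K H := hconn
  obtain ⟨⟨hlamK, hKq, hK1, hK2⟩, ⟨hHTq, hHp, -, -⟩, hHK, R, hR0, hR1, hRsum⟩ := hconn'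
  have h02 : f0 ≫ B.q = f2 ≫ B.q := h01.trans h21.symm
  -- the two "legs"
  have hap : (B.E2.pair f0 f2 h02 ≫ B.mu) ≫ D.p.app E = f2 := by
    rw [Category.assoc, B.mu_p, B.E2.pair_pr1]
  have hbp : (B.P.pair f1 f2 h21.symm ≫ H) ≫ D.p.app E = f2 := by
    rw [Category.assoc, hHp, B.P.pair_pr1]
  have hab : (B.E2.pair f0 f2 h02 ≫ B.mu) ≫ D.p.app E
      = (B.P.pair f1 f2 h21.symm ≫ H) ≫ D.p.app E := hap.trans hbp.symm
  -- component computations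
  have haTq : (B.E2.pair f0 f2 h02 ≫ B.mu) ≫ D.T.map B.q
      = f1 ≫ D.p.app M ≫ D.zero.app M := by
    rw [Category.assoc, B.mu_Tq, B.E2.pair_pr0_assoc, ← Category.assoc, h01, Category.assoc]
  have hbTq : (B.P.pair f1 f2 h21.symm ≫ H) ≫ D.T.map B.q = f1 := by
    rw [Category.assoc, hHTq, B.P.pair_pr0]
  have hA : (f1 ≫ D.p.app M ≫ D.zero.app M) ≫ D.p.app M = f1 ≫ D.p.app M := by
    simp only [Category.assoc, D.zero_p]
    simp
  -- (1) composing with T q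
  have hTq : ((D.T2 E).pair (B.E2.pair f0 f2 h02 ≫ B.mu)
      (B.P.pair f1 f2 h21.symm ≫ H) hab ≫ D.add E) ≫ D.T.map B.q = f1 := by
    have s1 := (Category.assoc ((D.T2 E).pair (B.E2.pair f0 f2 h02 ≫ B.mu)
        (B.P.pair f1 f2 h21.symm ≫ H) hab) (D.add E) (D.T.map B.q)).trans
      (D.add_nat B.q _ _ hab (D.comp_Tf_p B.q hab))
    have s2 := congrArg (· ≫ D.add M) ((D.T2 M).pair_congr haTq hbTq
      (D.comp_Tf_p B.q hab) hA)
    have s3 := D.add_comm' M (f1 ≫ D.p.app M ≫ D.zero.app M) f1 hA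
    have s4 := D.add_zero' M f1 hA.symm
    exact s1.trans (s2.trans (s3.trans s4))
  -- (2) composing with p
  have hp : ((D.T2 E).pair (B.E2.pair f0 f2 h02 ≫ B.mu)
      (B.P.pair f1 f2 h21.symm ≫ H) hab ≫ D.add E) ≫ D.p.app E = f2 := by
    rw [Category.assoc, D.add_p E, (D.T2 E).pair_pr0_assoc, hap]
  -- (3) composing with K
  have hcK : ((D.T2 E).pr0 ≫ K) ≫ B.q = ((D.T2 E).pr1 ≫ K) ≫ B.q := by
    rw [Category.assoc, hKq, Category.assoc, hKq, ← Category.assoc, ← Category.assoc,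
      (D.T2 E).comm]
  have hadd := B.addE_K K hK1 hKq hcK
  have hf : f0 ≫ B.q = (f2 ≫ B.q ≫ B.zeroq) ≫ B.q := by
    simp only [Category.assoc, B.zeroq_q, Category.comp_id]
    exact h02
  have hPP : (D.T2 E).pair (B.E2.pair f0 f2 h02 ≫ B.mu) (B.P.pair f1 f2 h21.symm ≫ H) hab
      ≫ B.E2.pair ((D.T2 E).pr0 ≫ K) ((D.T2 E).pr1 ≫ K) hcK
      = B.E2.pair f0 (f2 ≫ B.q ≫ B.zeroq) hf := by
    apply B.E2.hom_ext
    · rw [Category.assoc, B.E2.pair_pr0, B.E2.pair_pr0, ← Category.assoc,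
        (D.T2 E).pair_pr0, Category.assoc, B.mu_K K hlamK hK1 hK2 hKq, B.E2.pair_pr0]
    · rw [Category.assoc, B.E2.pair_pr1, B.E2.pair_pr1, ← Category.assoc,
        (D.T2 E).pair_pr1, Category.assoc, hHK, B.P.pair_pr1_assoc]
  have hzz : f2 ≫ B.q ≫ B.zeroq = f0 ≫ B.q ≫ B.zeroq := by
    rw [← Category.assoc, ← h02, Category.assoc]
  have hf' : f0 ≫ B.q = (f0 ≫ B.q ≫ B.zeroq) ≫ B.q := by
    simp [Category.assoc, B.zeroq_q]
  have hK0 : ((D.T2 E).pair (B.E2.pair f0 f2 h02 ≫ B.mu)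
      (B.P.pair f1 f2 h21.symm ≫ H) hab ≫ D.add E) ≫ K = f0 := by
    have step : ((D.T2 E).pair (B.E2.pair f0 f2 h02 ≫ B.mu)
        (B.P.pair f1 f2 h21.symm ≫ H) hab ≫ D.add E) ≫ K
        = B.E2.pair f0 (f2 ≫ B.q ≫ B.zeroq) hf ≫ B.addq := by
      rw [Category.assoc, hadd, ← Category.assoc, hPP]
    have step2 : B.E2.pair f0 (f2 ≫ B.q ≫ B.zeroq) hf
        = B.E2.pair f0 (f0 ≫ B.q ≫ B.zeroq) hf' := B.E2.pair_congr rfl hzz _ _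
    exact step.trans ((congrArg (· ≫ B.addq) step2).trans (B.addq_zero f0 hf'))
  -- the decomposition of the identity
  have c0 : (R ≫ B.mu) ≫ D.p.app E = (D.hdesc B.q B.P ≫ H) ≫ D.p.app E := by
    rw [Category.assoc, B.mu_p, hR1, Category.assoc, hHp, TangentCat.hdesc, B.P.pair_pr1]
  have hsum' : (D.T2 E).pair (R ≫ B.mu) (D.hdesc B.q B.P ≫ H) c0 ≫ D.add E
      = 𝟙 (D.T.obj E) := by
    rw [TangentCat.hadd, dif_pos c0] at hRsum
    exact hRsum
  refine ⟨(D.T2 E).pair (B.E2.pair f0 f2 h02 ≫ B.mu)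
      (B.P.pair f1 f2 h21.symm ≫ H) hab ≫ D.add E, ⟨hK0, hTq, hp⟩, ?_⟩
  rintro h' ⟨u1, u2, u3⟩
  have hR' : h' ≫ R = B.E2.pair f0 f2 h02 := by
    apply B.E2.hom_ext
    · rw [Category.assoc, hR0, B.E2.pair_pr0]
      exact u1
    · rw [Category.assoc, hR1, B.E2.pair_pr1]
      exact u3
  have hU' : h' ≫ D.hdesc B.q B.P = B.P.pair f1 f2 h21.symm := by
    apply B.P.hom_ext
    · rw [TangentCat.hdesc, Category.assoc, B.P.pair_pr0, B.P.pair_pr0]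
      exact u2
    · rw [TangentCat.hdesc, Category.assoc, B.P.pair_pr1, B.P.pair_pr1]
      exact u3
  have hcomp : h' ≫ (D.T2 E).pair (R ≫ B.mu) (D.hdesc B.q B.P ≫ H) c0
      = (D.T2 E).pair (B.E2.pair f0 f2 h02 ≫ B.mu)
          (B.P.pair f1 f2 h21.symm ≫ H) hab := by
    apply (D.T2 E).hom_ext
    · rw [Category.assoc, (D.T2 E).pair_pr0, (D.T2 E).pair_pr0, ← Category.assoc, hR']
    · rw [Category.assoc, (D.T2 E).pair_pr1, (D.T2 E).pair_pr1, ← Category.assoc, hU']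
  calc h' = h' ≫ 𝟙 (D.T.obj E) := (Category.comp_id h').symm
    _ = h' ≫ (D.T2 E).pair (R ≫ B.mu) (D.hdesc B.q B.P ≫ H) c0 ≫ D.add E := by
        rw [hsum']
    _ = (h' ≫ (D.T2 E).pair (R ≫ B.mu) (D.hdesc B.q B.P ≫ H) c0) ≫ D.add E :=
        (Category.assoc _ _ _).symm
    _ = (D.T2 E).pair (B.E2.pair f0 f2 h02 ≫ B.mu)
          (B.P.pair f1 f2 h21.symm ≫ H) hab ≫ D.add E := by rw [hcomp]
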